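/- For all integers 1 ≤ r, s ≤ k, the following identity holds in ℚ⟦x⟧: U_{2k}(x/2) · Σ_{n≥0} |A_{2n+2}^{(k)}(r→s)| x^{2n+1} equals (−1)^{r+s+1} x U_{2r−2}(x/2) U_{2k−2s}(x/2) if r ≤ s, and equals (−1)^{r+s+1} x U_{2s−1}(x/2) U_{2k−2r+1}(x/2) if r > s. -/

import Mathlib

/-- Number of alternating sequences of length `n` bounded by `k` with prescribed
first entry `r` and last entry `s`. -/
noncomputable def altCountFL (k n r s : ℕ) : ℕ :=
  Nat.card {a : Fin n → ℤ //
    (∀ i, 1 ≤ a i ∧ a i ≤ k) ∧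
    (∀ (i : ℕ) (h : i + 1 < n),
      if i % 2 = 0 then a ⟨i, Nat.lt_of_succ_lt h⟩ ≤ a ⟨i + 1, h⟩
      else a ⟨i + 1, h⟩ ≤ a ⟨i, Nat.lt_of_succ_lt h⟩) ∧
    (∀ h : 0 < n, a ⟨0, h⟩ = r ∧ a ⟨n - 1, Nat.sub_lt h one_pos⟩ = s)}

/-- `U2 m` is the polynomial `U_m(x/2)`, where `U_m` is the `m`-th Chebyshev
polynomial of the second kind (indexed over `ℤ`). -/
noncomputable def U2 (m : ℤ) : Polynomial ℚ :=
  (Polynomial.Chebyshev.U ℚ m).comp (Polynomial.C (1/2 : ℚ) * Polynomial.X)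



open Polynomial in
theorem U2_add_two (n : ℤ) : U2 (n + 2) = X * U2 (n + 1) - U2 n := by
  have h2 : ((2:ℕ) : ℚ[X]) * (C (1/2 : ℚ) * X) = X := by
    rw [Nat.cast_ofNat, show (2:ℚ[X]) = C (2:ℚ) from by rw [map_ofNat], ← mul_assoc, ← C_mul]
    norm_num
  unfold U2
  rw [Polynomial.Chebyshev.U_add_two, sub_comp, mul_comp, mul_comp, X_comp, ofNat_comp]
  linear_combination ((Polynomial.Chebyshev.U ℚ (n+1)).comp (C (1/2:ℚ) * X)) * h2

theorem U2_zero : U2 0 = 1 := by simp [U2, Polynomial.Chebyshev.U_zero]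

open Polynomial in
theorem U2_one : U2 1 = X := by
  have h2 : ((2:ℕ) : ℚ[X]) * (C (1/2 : ℚ) * X) = X := by
    rw [Nat.cast_ofNat, show (2:ℚ[X]) = C (2:ℚ) from by rw [map_ofNat], ← mul_assoc, ← C_mul]
    norm_num
  simp only [U2, Polynomial.Chebyshev.U_one, Polynomial.mul_comp, Polynomial.X_comp,
    Polynomial.ofNat_comp]
  exact h2

theorem U2_neg_one : U2 (-1) = 0 := by simp [U2, Polynomial.Chebyshev.U_neg_one]

theorem U2_neg_two : U2 (-2) = -1 := by simp [U2, Polynomial.Chebyshev.U_neg_two]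

open Polynomial in
theorem U2_mul_U2 (a b : ℤ) : U2 a * U2 b = U2 (a + b) + U2 (a - 1) * U2 (b - 1) := by
  induction b using Polynomial.Chebyshev.induct with
  | zero => simp [U2_zero, U2_neg_one]
  | one =>
      have h := U2_add_two (a - 1)
      rw [show a - 1 + 2 = a + 1 by ring, show a - 1 + 1 = a by ring] at h
      rw [U2_one, show (1:ℤ) - 1 = 0 by ring, U2_zero]
      linear_combination -h
  | add_two n h1 h0 =>
      rw [show a + ((n:ℤ) + 1) = a + n + 1 by ring, show ((n:ℤ)+1) - 1 = n by ring] at h1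
      rw [show ((n:ℤ) + 2) - 1 = n + 1 by ring, show a + ((n:ℤ)+2) = a + n + 2 by ring]
      have r1 := U2_add_two (n : ℤ)
      have r2 := U2_add_two (a + n)
      have r3 := U2_add_two ((n:ℤ) - 1)
      rw [show (n:ℤ) - 1 + 2 = n + 1 by ring, show (n:ℤ) - 1 + 1 = n by ring] at r3
      linear_combination (U2 a) * r1 + h1 * X - h0 - r2 - (U2 (a-1)) * r3
  | neg_add_one n h0 h1 =>
      rw [show a + (-(n:ℤ) + 1) = a - n + 1 by ring, show (-(n:ℤ)+1) - 1 = -n by ring] at h1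
      rw [show a + (-(n:ℤ)) = a - n by ring, show (-(n:ℤ)) - 1 = -n - 1 by ring] at h0
      rw [show a + (-(n:ℤ) - 1) = a - n - 1 by ring, show (-(n:ℤ)-1) - 1 = -n - 2 by ring]
      have r1 := U2_add_two (-(n:ℤ) - 1)
      rw [show -(n:ℤ) - 1 + 2 = -n + 1 by ring, show -(n:ℤ) - 1 + 1 = -n by ring] at r1
      have r2 := U2_add_two (a - n - 1)
      rw [show a - (n:ℤ) - 1 + 2 = a - n + 1 by ring, show a - (n:ℤ) - 1 + 1 = a - n by ring] at r2
      have r3 := U2_add_two (-(n:ℤ) - 2)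
      rw [show -(n:ℤ) - 2 + 2 = -n by ring, show -(n:ℤ) - 2 + 1 = -n - 1 by ring] at r3
      linear_combination (U2 a) * r1 - h1 + h0 * X - r2 - (U2 (a-1)) * r3


open Polynomial Finset

-- telescoping over Ioc
theorem teleIoc {M : Type*} [AddCommGroup M] (φ : ℕ → M) {a b : ℕ} (h : a ≤ b) :
    ∑ t ∈ Finset.Ioc a b, (φ t - φ (t-1)) = φ b - φ a := by
  induction b, h using Nat.le_induction with
  | base => simp
  | succ b hab ih =>
      rw [Finset.sum_Ioc_succ_top (by omega), ih, show b+1-1 = b by omega]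
      abel

theorem teleIco {M : Type*} [AddCommGroup M] (φ : ℕ → M) {a b : ℕ} (h : a ≤ b) :
    ∑ t ∈ Finset.Ico a b, (φ t - φ (t-1)) = φ (b-1) - φ (a-1) := by
  induction b, h using Nat.le_induction with
  | base => simp
  | succ b hab ih =>
      rw [Finset.sum_Ico_succ_top (by omega), show b+1-1 = b by omega]
      rcases Nat.eq_or_lt_of_le hab with rfl | hlt
      · simp
      · rw [ih]
        abel

theorem abelIoc {M : Type*} [CommRing M] (φ : ℕ → M) {a b : ℕ} (h : a ≤ b) :
    ∑ t ∈ Finset.Ioc a b, (t : M) * (φ t - φ (t-1))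
      = (b : M) * φ b - (a : M) * φ a - ∑ t ∈ Finset.Ico a b, φ t := by
  induction b, h using Nat.le_induction with
  | base => simp
  | succ b hab ih =>
      rw [Finset.sum_Ioc_succ_top (by omega), Finset.sum_Ico_succ_top (by omega), ih,
        show b+1-1 = b by omega]
      push_cast
      ring



theorem X_mul_U2 (m : ℤ) : X * U2 m = U2 (m + 1) + U2 (m - 1) := by
  have h := U2_add_two (m - 1)
  rw [show m - 1 + 2 = m + 1 by ring, show m - 1 + 1 = m by ring] at h
  linear_combination -h

/-- the polynomial `(-1)^(r+t+1) * P(r,t)` -/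
noncomputable def qq (k r t : ℕ) : ℚ[X] :=
  if r ≤ t then ((-1 : ℚ[X]))^(r+t+1) * (U2 (2*(r:ℤ)-2) * U2 (2*(k:ℤ)-2*(t:ℤ)))
  else ((-1 : ℚ[X]))^(r+t+1) * (U2 (2*(t:ℤ)-1) * U2 (2*(k:ℤ)-2*(r:ℤ)+1))

noncomputable def vv (t : ℕ) : ℚ[X] := (-1)^t * (U2 (2*(t:ℤ)+1) + U2 (2*(t:ℤ)-1))
noncomputable def ww (t : ℕ) : ℚ[X] := (-1)^t * U2 (2*(t:ℤ)+1)
noncomputable def zz (k t : ℕ) : ℚ[X] := (-1)^t * (U2 (2*(k:ℤ)-2*(t:ℤ)) + U2 (2*(k:ℤ)-2*(t:ℤ)-2))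
noncomputable def yy (k t : ℕ) : ℚ[X] := (-1)^t * U2 (2*(k:ℤ)-2*(t:ℤ)-2)
noncomputable def Cc (k r : ℕ) : ℚ[X] := (-1)^(r+1) * U2 (2*(k:ℤ)-2*(r:ℤ)+1)
noncomputable def Dd (r : ℕ) : ℚ[X] := (-1)^(r+1) * U2 (2*(r:ℤ)-2)

theorem X_sq_mul (m : ℤ) : X^2 * U2 m = U2 (m+2) + 2 * U2 m + U2 (m-2) := by
  have h1 := X_mul_U2 m
  have h2 := X_mul_U2 (m+1)
  have h3 := X_mul_U2 (m-1)
  rw [show m + 1 + 1 = m + 2 by ring, show m + 1 - 1 = m by ring] at h2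
  rw [show m - 1 + 1 = m by ring, show m - 1 - 1 = m - 2 by ring] at h3
  calc X^2 * U2 m = X * (X * U2 m) := by ring
  _ = _ := by rw [h1, mul_add, h2, h3]; ring

theorem vv_sub (t : ℕ) : vv (t+1) - vv t = (-1)^(t+1) * (X^2 * U2 (2*(t:ℤ)+1)) := by
  simp only [vv]
  push_cast
  rw [show (2*((t:ℤ)+1)+1 : ℤ) = (2*t+1)+2 by ring, show (2*((t:ℤ)+1)-1 : ℤ) = 2*t+1 by ring,
    show (2*(t:ℤ)-1 : ℤ) = (2*t+1)-2 by ring, X_sq_mul (2*(t:ℤ)+1), pow_succ]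
  ring

theorem hA (k r t : ℕ) (h1 : 1 ≤ t) (h2 : t < r) :
    X^2 * qq k r t = Cc k r * (vv t - vv (t-1)) := by
  obtain ⟨t, rfl⟩ : ∃ t', t = t' + 1 := ⟨t - 1, by omega⟩
  rw [show t + 1 - 1 = t by omega, qq, if_neg (by omega), vv_sub, Cc]
  rw [show (2*((t:ℕ)+1:ℕ):ℤ)-1 = 2*(t:ℤ)+1 by push_cast; ring]
  rw [show r + (t+1) + 1 = (r+1) + (t+1) by ring, pow_add]
  ring

theorem zz_sub (k t : ℕ) : zz k (t+1) - zz k t = (-1)^(t+1) * (X^2 * U2 (2*(k:ℤ)-2*(t:ℤ)-2)) := by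
  simp only [zz]
  push_cast
  rw [show (2*(k:ℤ)-2*((t:ℤ)+1) : ℤ) = 2*(k:ℤ)-2*(t:ℤ)-2 by ring]
  have h := X_sq_mul (2*(k:ℤ)-2*(t:ℤ)-2)
  rw [show (2*(k:ℤ)-2*(t:ℤ)-2)+2 = 2*(k:ℤ)-2*(t:ℤ) by ring] at h
  rw [h, pow_succ]
  ring

theorem hB (k r t : ℕ) (h1 : 1 ≤ t) (h2 : r ≤ t) :
    X^2 * qq k r t = Dd r * (zz k t - zz k (t-1)) := by
  obtain ⟨t, rfl⟩ : ∃ t', t = t' + 1 := ⟨t - 1, by omega⟩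
  rw [show t + 1 - 1 = t by omega, qq, if_pos (by omega), zz_sub, Dd]
  rw [show (2*(k:ℤ)-2*((t:ℕ)+1:ℕ):ℤ) = 2*(k:ℤ)-2*(t:ℤ)-2 by push_cast; ring]
  rw [show r + (t+1) + 1 = (r+1) + (t+1) by ring, pow_add]
  ring

theorem vv_eq (t : ℕ) (h : 1 ≤ t) : vv t = ww t - ww (t-1) := by
  obtain ⟨t, rfl⟩ : ∃ t', t = t' + 1 := ⟨t - 1, by omega⟩
  rw [show t + 1 - 1 = t by omega]
  simp only [vv, ww]
  push_cast
  rw [show (2*((t:ℤ)+1)-1 : ℤ) = 2*t+1 by ring, pow_succ]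
  ring

theorem zz_eq (k t : ℕ) (h : 1 ≤ t) : zz k t = yy k t - yy k (t-1) := by
  obtain ⟨t, rfl⟩ : ∃ t', t = t' + 1 := ⟨t - 1, by omega⟩
  rw [show t + 1 - 1 = t by omega]
  simp only [zz, yy]
  push_cast
  rw [show (2*(k:ℤ)-2*((t:ℤ)+1) : ℤ) = 2*(k:ℤ)-2*(t:ℤ)-2 by ring, pow_succ]
  ring

theorem zz_k (k : ℕ) : zz k k = 0 := by
  rw [zz, show 2*(k:ℤ)-2*(k:ℤ) = 0 by ring, show (0:ℤ)-2 = -2 by ring,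
    U2_zero, U2_neg_two]
  ring

theorem vv_zero : vv 0 = ww 0 := by
  simp only [vv, ww]
  norm_num [U2_neg_one]

theorem sum_vv (m : ℕ) : ∑ t ∈ Finset.Ico 0 (m+1), vv t = ww m := by
  induction m with
  | zero => simpa using vv_zero
  | succ m ih =>
      rw [Finset.sum_Ico_succ_top (by omega), ih, vv_eq (m+1) (by omega),
        show m + 1 - 1 = m by omega]
      ring

theorem P2 (k r s : ℕ) (hr : 1 ≤ r) (hrk : r ≤ k) (hs : 1 ≤ s) (hsk : s ≤ k) :
    qq k r s = (if r ≤ s then U2 (2*(k:ℤ)) else 0)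
      + X^2 * ∑ t ∈ Finset.Ioc 0 k, ((min t s : ℕ) : ℚ[X]) * qq k r t := by
  have hXs : X^2 * ∑ t ∈ Finset.Ioc 0 k, ((min t s : ℕ) : ℚ[X]) * qq k r t
      = (∑ t ∈ Finset.Ioc 0 s, (t:ℚ[X]) * (X^2 * qq k r t))
        + ∑ t ∈ Finset.Ioc s k, (s:ℚ[X]) * (X^2 * qq k r t) := by
    rw [← Finset.sum_Ioc_consecutive _ (Nat.zero_le s) hsk, mul_add, Finset.mul_sum,
      Finset.mul_sum]
    congr 1
    · refine Finset.sum_congr rfl fun t ht => ?_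
      have := Finset.mem_Ioc.mp ht
      rw [min_eq_left (by omega)]; ring
    · refine Finset.sum_congr rfl fun t ht => ?_
      have := Finset.mem_Ioc.mp ht
      rw [min_eq_right (by omega)]; ring
  obtain ⟨b, rfl⟩ : ∃ b, s = b + 1 := ⟨s - 1, by omega⟩
  by_cases hrs : r ≤ b + 1
  · -- case r ≤ s
    rw [if_pos hrs, hXs]
    have hsplit : ∑ t ∈ Finset.Ioc 0 (b+1), (t:ℚ[X]) * (X^2 * qq k r t)
        = (∑ t ∈ Finset.Ioc 0 (r-1), (t:ℚ[X]) * (X^2 * qq k r t))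
          + ∑ t ∈ Finset.Ioc (r-1) (b+1), (t:ℚ[X]) * (X^2 * qq k r t) :=
      (Finset.sum_Ioc_consecutive _ (by omega) (by omega)).symm
    have hA1 : ∑ t ∈ Finset.Ioc 0 (r-1), (t:ℚ[X]) * (X^2 * qq k r t)
        = Cc k r * (((r-1 : ℕ):ℚ[X]) * vv (r-1) - ∑ t ∈ Finset.Ico 0 (r-1), vv t) := by
      have e1 : ∀ t ∈ Finset.Ioc 0 (r-1), (t:ℚ[X]) * (X^2 * qq k r t)
          = Cc k r * ((t:ℚ[X]) * (vv t - vv (t-1))) := by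
        intro t ht
        have := Finset.mem_Ioc.mp ht
        rw [hA k r t (by omega) (by omega)]; ring
      rw [Finset.sum_congr rfl e1, ← Finset.mul_sum, abelIoc vv (by omega : 0 ≤ r-1)]
      push_cast; ring
    have hB1 : ∑ t ∈ Finset.Ioc (r-1) (b+1), (t:ℚ[X]) * (X^2 * qq k r t)
        = Dd r * (((b+1 : ℕ):ℚ[X]) * zz k (b+1) - ((r-1 : ℕ):ℚ[X]) * zz k (r-1)
            - ∑ t ∈ Finset.Ico (r-1) (b+1), zz k t) := by
      have e1 : ∀ t ∈ Finset.Ioc (r-1) (b+1), (t:ℚ[X]) * (X^2 * qq k r t)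
          = Dd r * ((t:ℚ[X]) * (zz k t - zz k (t-1))) := by
        intro t ht
        have := Finset.mem_Ioc.mp ht
        rw [hB k r t (by omega) (by omega)]; ring
      rw [Finset.sum_congr rfl e1, ← Finset.mul_sum, abelIoc (zz k) (by omega : r-1 ≤ b+1)]
    have hC1 : ∑ t ∈ Finset.Ioc (b+1) k, ((b+1 : ℕ):ℚ[X]) * (X^2 * qq k r t)
        = ((b+1 : ℕ):ℚ[X]) * Dd r * (zz k k - zz k (b+1)) := by
      have e1 : ∀ t ∈ Finset.Ioc (b+1) k, ((b+1:ℕ):ℚ[X]) * (X^2 * qq k r t)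
          = ((b+1:ℕ):ℚ[X]) * Dd r * (zz k t - zz k (t-1)) := by
        intro t ht
        have := Finset.mem_Ioc.mp ht
        rw [hB k r t (by omega) (by omega)]; ring
      calc ∑ t ∈ Finset.Ioc (b+1) k, ((b+1 : ℕ):ℚ[X]) * (X^2 * qq k r t)
          = ∑ t ∈ Finset.Ioc (b+1) k, ((b+1:ℕ):ℚ[X]) * Dd r * (zz k t - zz k (t-1)) :=
            Finset.sum_congr rfl e1
        _ = ((b+1:ℕ):ℚ[X]) * Dd r * ∑ t ∈ Finset.Ioc (b+1) k, (zz k t - zz k (t-1)) :=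
            (Finset.mul_sum _ _ _).symm
        _ = ((b+1 : ℕ):ℚ[X]) * Dd r * (zz k k - zz k (b+1)) := by rw [teleIoc (zz k) hsk]
    rw [hsplit, hA1, hB1, hC1, zz_k]
    obtain ⟨a, rfl⟩ | rfl : (∃ a, r = a + 2) ∨ r = 1 := by
      rcases Nat.lt_or_ge r 2 with h | h
      · right; omega
      · left; exact ⟨r - 2, by omega⟩
    · -- r = a + 2 ≥ 2
      have hs1 : ∑ t ∈ Finset.Ico 0 (a+2-1), vv t = ww a := by
        rw [show a+2-1 = a+1 by omega, sum_vv]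
      have hs2 : ∑ t ∈ Finset.Ico (a+2-1) (b+1), zz k t = yy k b - yy k a := by
        have e1 : ∀ t ∈ Finset.Ico (a+2-1) (b+1), zz k t = yy k t - yy k (t-1) := by
          intro t ht
          have := Finset.mem_Ico.mp ht
          exact zz_eq k t (by omega)
        rw [Finset.sum_congr rfl e1, teleIco (yy k) (by omega : a+2-1 ≤ b+1),
          show b+1-1 = b by omega, show a+2-1-1 = a by omega]
      rw [hs1, hs2]
      rw [show a+2-1 = a+1 from rfl]
      simp only [qq, if_pos (show a+2 ≤ b+1 by omega), vv, ww, yy, zz, Cc, Dd]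
      push_cast
      rw [show (2*((a:ℤ)+2)-2 : ℤ) = 2*(a:ℤ)+2 by ring,
        show (2*(k:ℤ)-2*((b:ℤ)+1) : ℤ) = 2*(k:ℤ)-2*(b:ℤ)-2 by ring,
        show (2*((a:ℤ)+1)+1 : ℤ) = 2*(a:ℤ)+3 by ring,
        show (2*((a:ℤ)+1)-1 : ℤ) = 2*(a:ℤ)+1 by ring,
        show (2*(k:ℤ)-2*((a:ℤ)+1) : ℤ) = 2*(k:ℤ)-2*(a:ℤ)-2 by ring,
        show (2*(k:ℤ)-2*((a:ℤ)+2)+1 : ℤ) = 2*(k:ℤ)-2*(a:ℤ)-3 by ring]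
      have he : ((-1:ℚ[X])^a) * ((-1:ℚ[X])^a) = 1 := by
        rw [← pow_add]; exact Even.neg_one_pow ⟨a, rfl⟩
      have hx1 := X_mul_U2 (2*(a:ℤ)+2)
      rw [show (2*(a:ℤ)+2+1 : ℤ) = 2*(a:ℤ)+3 by ring,
        show (2*(a:ℤ)+2-1 : ℤ) = 2*(a:ℤ)+1 by ring] at hx1
      have hx2 := X_mul_U2 (2*(k:ℤ)-2*(a:ℤ)-3)
      rw [show (2*(k:ℤ)-2*(a:ℤ)-3+1 : ℤ) = 2*(k:ℤ)-2*(a:ℤ)-2 by ring,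
        show (2*(k:ℤ)-2*(a:ℤ)-3-1 : ℤ) = 2*(k:ℤ)-2*(a:ℤ)-2-2 by ring] at hx2
      have hm := U2_mul_U2 (2*(a:ℤ)+2) (2*(k:ℤ)-2*(a:ℤ)-2)
      rw [show (2*(a:ℤ)+2+(2*(k:ℤ)-2*(a:ℤ)-2) : ℤ) = 2*(k:ℤ) by ring,
        show (2*(a:ℤ)+2-1 : ℤ) = 2*(a:ℤ)+1 by ring,
        show (2*(k:ℤ)-2*(a:ℤ)-2-1 : ℤ) = 2*(k:ℤ)-2*(a:ℤ)-3 by ring] at hm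
      linear_combination
        (-( ((a:ℚ[X])+1) * U2 (2*(k:ℤ)-2*(a:ℤ)-3) * (U2 (2*(a:ℤ)+3) + U2 (2*(a:ℤ)+1))
          + U2 (2*(k:ℤ)-2*(a:ℤ)-3) * U2 (2*(a:ℤ)+1)
          - ((a:ℚ[X])+1) * U2 (2*(a:ℤ)+2) * (U2 (2*(k:ℤ)-2*(a:ℤ)-2) + U2 (2*(k:ℤ)-2*(a:ℤ)-2-2))
          - U2 (2*(a:ℤ)+2) * U2 (2*(k:ℤ)-2*(a:ℤ)-2))) * he
        + ((a:ℚ[X])+1) * U2 (2*(k:ℤ)-2*(a:ℤ)-3) * hx1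
        - ((a:ℚ[X])+1) * U2 (2*(a:ℤ)+2) * hx2
        + hm
    · -- r = 1
      have he1 : Finset.Ico 0 (1-1) = (∅ : Finset ℕ) := rfl
      have hs2 : ∑ t ∈ Finset.Ico (1-1) (b+1), zz k t = zz k 0 + (yy k b - yy k 0) := by
        rw [show (1-1 : ℕ) = 0 by omega,
          ← Finset.sum_Ico_consecutive _ (by omega : (0:ℕ) ≤ 1) (by omega : (1:ℕ) ≤ b+1)]
        congr 1
        · rw [show Finset.Ico 0 1 = {0} from rfl, Finset.sum_singleton]
        · have e1 : ∀ t ∈ Finset.Ico 1 (b+1), zz k t = yy k t - yy k (t-1) := by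
            intro t ht
            have := Finset.mem_Ico.mp ht
            exact zz_eq k t (by omega)
          rw [Finset.sum_congr rfl e1, teleIco (yy k) (by omega : 1 ≤ b+1),
            show b+1-1 = b by omega, show (1:ℕ)-1 = 0 by omega]
      rw [he1, hs2, Finset.sum_empty]
      norm_num
      simp only [qq, if_pos (show 1 ≤ b+1 by omega), vv, ww, yy, zz, Cc, Dd]
      push_cast
      rw [show (2*(k:ℤ)-2*((b:ℤ)+1) : ℤ) = 2*(k:ℤ)-2*(b:ℤ)-2 by ring,
        show (2*(k:ℤ)-0 : ℤ) = 2*(k:ℤ) by ring, U2_zero]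
      ring
  · -- case s < r
    rw [if_neg hrs, hXs]
    obtain ⟨a, rfl⟩ : ∃ a, r = a + 2 := ⟨r - 2, by omega⟩
    have hA1 : ∑ t ∈ Finset.Ioc 0 (b+1), (t:ℚ[X]) * (X^2 * qq (k) (a+2) t)
        = Cc k (a+2) * (((b+1 : ℕ):ℚ[X]) * vv (b+1) - ∑ t ∈ Finset.Ico 0 (b+1), vv t) := by
      have e1 : ∀ t ∈ Finset.Ioc 0 (b+1), (t:ℚ[X]) * (X^2 * qq k (a+2) t)
          = Cc k (a+2) * ((t:ℚ[X]) * (vv t - vv (t-1))) := by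
        intro t ht
        have := Finset.mem_Ioc.mp ht
        rw [hA k (a+2) t (by omega) (by omega)]; ring
      rw [Finset.sum_congr rfl e1, ← Finset.mul_sum, abelIoc vv (by omega : 0 ≤ b+1)]
      push_cast; ring
    have hsplit : ∑ t ∈ Finset.Ioc (b+1) k, ((b+1:ℕ):ℚ[X]) * (X^2 * qq k (a+2) t)
        = (∑ t ∈ Finset.Ioc (b+1) (a+1), ((b+1:ℕ):ℚ[X]) * (X^2 * qq k (a+2) t))
          + ∑ t ∈ Finset.Ioc (a+1) k, ((b+1:ℕ):ℚ[X]) * (X^2 * qq k (a+2) t) :=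
      (Finset.sum_Ioc_consecutive _ (by omega) (by omega)).symm
    have hB1 : ∑ t ∈ Finset.Ioc (b+1) (a+1), ((b+1:ℕ):ℚ[X]) * (X^2 * qq k (a+2) t)
        = ((b+1:ℕ):ℚ[X]) * Cc k (a+2) * (vv (a+1) - vv (b+1)) := by
      have e1 : ∀ t ∈ Finset.Ioc (b+1) (a+1), ((b+1:ℕ):ℚ[X]) * (X^2 * qq k (a+2) t)
          = ((b+1:ℕ):ℚ[X]) * Cc k (a+2) * (vv t - vv (t-1)) := by
        intro t ht
        have := Finset.mem_Ioc.mp ht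
        rw [hA k (a+2) t (by omega) (by omega)]; ring
      calc ∑ t ∈ Finset.Ioc (b+1) (a+1), ((b+1:ℕ):ℚ[X]) * (X^2 * qq k (a+2) t)
          = ∑ t ∈ Finset.Ioc (b+1) (a+1), ((b+1:ℕ):ℚ[X]) * Cc k (a+2) * (vv t - vv (t-1)) :=
            Finset.sum_congr rfl e1
        _ = ((b+1:ℕ):ℚ[X]) * Cc k (a+2) * ∑ t ∈ Finset.Ioc (b+1) (a+1), (vv t - vv (t-1)) :=
            (Finset.mul_sum _ _ _).symm
        _ = ((b+1:ℕ):ℚ[X]) * Cc k (a+2) * (vv (a+1) - vv (b+1)) := by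
            rw [teleIoc vv (by omega : b+1 ≤ a+1)]
    have hC1 : ∑ t ∈ Finset.Ioc (a+1) k, ((b+1:ℕ):ℚ[X]) * (X^2 * qq k (a+2) t)
        = ((b+1:ℕ):ℚ[X]) * Dd (a+2) * (zz k k - zz k (a+1)) := by
      have e1 : ∀ t ∈ Finset.Ioc (a+1) k, ((b+1:ℕ):ℚ[X]) * (X^2 * qq k (a+2) t)
          = ((b+1:ℕ):ℚ[X]) * Dd (a+2) * (zz k t - zz k (t-1)) := by
        intro t ht
        have := Finset.mem_Ioc.mp ht
        rw [hB k (a+2) t (by omega) (by omega)]; ring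
      calc ∑ t ∈ Finset.Ioc (a+1) k, ((b+1:ℕ):ℚ[X]) * (X^2 * qq k (a+2) t)
          = ∑ t ∈ Finset.Ioc (a+1) k, ((b+1:ℕ):ℚ[X]) * Dd (a+2) * (zz k t - zz k (t-1)) :=
            Finset.sum_congr rfl e1
        _ = ((b+1:ℕ):ℚ[X]) * Dd (a+2) * ∑ t ∈ Finset.Ioc (a+1) k, (zz k t - zz k (t-1)) :=
            (Finset.mul_sum _ _ _).symm
        _ = ((b+1:ℕ):ℚ[X]) * Dd (a+2) * (zz k k - zz k (a+1)) := by
            rw [teleIoc (zz k) (by omega : a+1 ≤ k)]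
    have hs1 : ∑ t ∈ Finset.Ico 0 (b+1), vv t = ww b := sum_vv b
    rw [hA1, hsplit, hB1, hC1, hs1, zz_k]
    simp only [qq, if_neg (show ¬ (a+2 ≤ b+1) by omega), if_pos (show a+2 ≤ a+2 by omega),
      vv, ww, yy, zz, Cc, Dd]
    push_cast
    rw [show (2*((b:ℤ)+1)-1 : ℤ) = 2*(b:ℤ)+1 by ring,
      show (2*((b:ℤ)+1)+1 : ℤ) = 2*(b:ℤ)+3 by ring,
      show (2*((a:ℤ)+1)+1 : ℤ) = 2*(a:ℤ)+3 by ring,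
      show (2*((a:ℤ)+1)-1 : ℤ) = 2*(a:ℤ)+1 by ring,
      show (2*(k:ℤ)-2*((a:ℤ)+1) : ℤ) = 2*(k:ℤ)-2*(a:ℤ)-2 by ring,
      show (2*(k:ℤ)-2*((a:ℤ)+2)+1 : ℤ) = 2*(k:ℤ)-2*(a:ℤ)-3 by ring,
      show (2*((a:ℤ)+2)-2 : ℤ) = 2*(a:ℤ)+2 by ring]
    have hx1 := X_mul_U2 (2*(a:ℤ)+2)
    rw [show (2*(a:ℤ)+2+1 : ℤ) = 2*(a:ℤ)+3 by ring,
      show (2*(a:ℤ)+2-1 : ℤ) = 2*(a:ℤ)+1 by ring] at hx1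
    have hx2 := X_mul_U2 (2*(k:ℤ)-2*(a:ℤ)-3)
    rw [show (2*(k:ℤ)-2*(a:ℤ)-3+1 : ℤ) = 2*(k:ℤ)-2*(a:ℤ)-2 by ring,
      show (2*(k:ℤ)-2*(a:ℤ)-3-1 : ℤ) = 2*(k:ℤ)-2*(a:ℤ)-2-2 by ring] at hx2
    linear_combination
      ((b:ℚ[X])+1) * ((-1:ℚ[X])^a) * ((-1:ℚ[X])^a) *
        (U2 (2*(k:ℤ)-2*(a:ℤ)-3) * hx1 - U2 (2*(a:ℤ)+2) * hx2)


open Polynomial in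
def Pred (k n r s : ℕ) (a : Fin n → ℤ) : Prop :=
  (∀ i, 1 ≤ a i ∧ a i ≤ k) ∧
  (∀ (i : ℕ) (h : i + 1 < n),
    if i % 2 = 0 then a ⟨i, Nat.lt_of_succ_lt h⟩ ≤ a ⟨i + 1, h⟩
    else a ⟨i + 1, h⟩ ≤ a ⟨i, Nat.lt_of_succ_lt h⟩) ∧
  (∀ h : 0 < n, a ⟨0, h⟩ = r ∧ a ⟨n - 1, Nat.sub_lt h one_pos⟩ = s)

noncomputable def Sfin (k n r s : ℕ) : Finset (Fin n → ℤ) :=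
  @Finset.filter _ (Pred k n r s) (Classical.decPred _)
    (Fintype.piFinset fun _ => Finset.Icc (1:ℤ) (k:ℤ))

theorem altCountFL_eq (k n r s : ℕ) : altCountFL k n r s = (Sfin k n r s).card := by
  classical
  rw [altCountFL, ← Nat.card_eq_finsetCard]
  apply Nat.card_congr
  apply Equiv.subtypeEquivRight
  intro a
  unfold Sfin
  rw [Finset.mem_filter, Fintype.mem_piFinset]
  constructor
  · intro h
    exact ⟨fun i => Finset.mem_Icc.mpr (h.1 i), h⟩
  · intro h
    exact h.2

theorem Sfin_one (k r s : ℕ) : (Sfin k 1 r s).card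
    = if r = s ∧ 1 ≤ s ∧ s ≤ k then 1 else 0 := by
  classical
  split_ifs with h
  · obtain ⟨rfl, hs1, hsk⟩ := h
    rw [Finset.card_eq_one]
    refine ⟨fun _ => (r:ℤ), ?_⟩
    ext a
    simp only [Sfin, Finset.mem_filter, Fintype.mem_piFinset, Finset.mem_singleton]
    constructor
    · rintro ⟨-, -, -, hend⟩
      obtain ⟨h0, -⟩ := hend one_pos
      funext i
      rw [Fin.fin_one_eq_zero i]
      exact h0
    · rintro rfl
      refine ⟨fun i => Finset.mem_Icc.mpr ⟨?_, ?_⟩, fun i => ⟨?_, ?_⟩,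
        fun i hi => by omega, fun _ => ⟨rfl, rfl⟩⟩
      · show (1:ℤ) ≤ (r:ℤ); exact_mod_cast hs1
      · show (r:ℤ) ≤ (k:ℤ); exact_mod_cast hsk
      · show (1:ℤ) ≤ (r:ℤ); exact_mod_cast hs1
      · show (r:ℤ) ≤ (k:ℤ); exact_mod_cast hsk
  · rw [Finset.card_eq_zero]
    ext a
    simp only [Sfin, Finset.mem_filter, Fintype.mem_piFinset, Finset.notMem_empty,
      iff_false]
    rintro ⟨hmem, hbd, -, hend⟩
    obtain ⟨h0, h1⟩ := hend one_pos
    have e1 : a ⟨0, one_pos⟩ = (s:ℤ) := h1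
    have hb : 1 ≤ a ⟨0, one_pos⟩ ∧ a ⟨0, one_pos⟩ ≤ (k:ℤ) := hbd ⟨0, one_pos⟩
    exact h ⟨by omega, by omega, by omega⟩

set_option maxHeartbeats 1000000 in
theorem Sfin_step (k n r s : ℕ) (hn : 1 ≤ n) (hs1 : 1 ≤ s) (hsk : s ≤ k) :
    (Sfin k (n+1) r s).card
      = ∑ t ∈ Finset.Icc 1 k,
          if (n % 2 = 1 → t ≤ s) ∧ (n % 2 = 0 → s ≤ t) then (Sfin k n r t).card else 0 := by
  classical
  have hm : n - 1 < n + 1 := by omega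
  have key : ∀ a ∈ Sfin k (n+1) r s,
      (1 ≤ a ⟨n-1, hm⟩ ∧ a ⟨n-1, hm⟩ ≤ (k:ℤ)) ∧
      (n % 2 = 1 → a ⟨n-1, hm⟩ ≤ (s:ℤ)) ∧ (n % 2 = 0 → (s:ℤ) ≤ a ⟨n-1, hm⟩) := by
    intro a ha
    rw [Sfin, Finset.mem_filter] at ha
    obtain ⟨-, hbd, halt, hend⟩ := ha
    have hlast : a ⟨n, by omega⟩ = (s:ℤ) := (hend (by omega)).2
    have halt' := halt (n-1) (by omega)
    have hidx : (⟨n-1+1, by omega⟩ : Fin (n+1)) = ⟨n, by omega⟩ :=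
      Fin.ext (show n-1+1 = n by omega)
    rw [hidx, hlast] at halt'
    refine ⟨hbd _, ?_, ?_⟩
    · intro hpar
      rw [if_pos (by omega : (n-1) % 2 = 0)] at halt'
      exact halt'
    · intro hpar
      rw [if_neg (by omega : ¬ (n-1) % 2 = 0)] at halt'
      exact halt'
  have H : ∀ a ∈ Sfin k (n+1) r s, (a ⟨n-1, hm⟩).toNat ∈ Finset.Icc 1 k := by
    intro a ha
    obtain ⟨⟨h1, h2⟩, -⟩ := key a ha
    rw [Finset.mem_Icc]
    omega
  rw [Finset.card_eq_sum_card_fiberwise H]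
  refine Finset.sum_congr rfl fun t ht => ?_
  rw [Finset.mem_Icc] at ht
  have hval : ∀ a ∈ Sfin k (n+1) r s, ((a ⟨n-1, hm⟩).toNat = t ↔ a ⟨n-1, hm⟩ = (t:ℤ)) := by
    intro a ha
    obtain ⟨⟨h1, h2⟩, -⟩ := key a ha
    omega
  by_cases hcond : (n % 2 = 1 → t ≤ s) ∧ (n % 2 = 0 → s ≤ t)
  · rw [if_pos hcond]
    apply Finset.card_bij (fun a _ => fun j : Fin n => a (Fin.castSucc j))
    · -- maps into Sfin k n r t
      intro a ha'
      rw [Finset.mem_filter] at ha'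
      obtain ⟨ha, hfa⟩ := ha'
      have hpen : a ⟨n-1, hm⟩ = (t:ℤ) := (hval a ha).mp hfa
      rw [Sfin, Finset.mem_filter] at ha ⊢
      obtain ⟨hpi, hbd, halt, hend⟩ := ha
      refine ⟨?_, ?_, ?_, ?_⟩
      · rw [Fintype.mem_piFinset]
        intro j
        exact (Fintype.mem_piFinset.mp hpi) _
      · intro j
        exact hbd _
      · intro i h
        exact halt i (by omega)
      · intro h
        refine ⟨(hend (by omega)).1, ?_⟩
        show a (Fin.castSucc ⟨n-1, Nat.sub_lt h one_pos⟩) = (t:ℤ)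
        exact hpen
    · -- injective
      intro a1 h1 a2 h2 heq
      rw [Finset.mem_filter, Sfin, Finset.mem_filter] at h1 h2
      have e1 : a1 ⟨n, Nat.lt_succ_self n⟩ = (s:ℤ) := (h1.1.2.2.2 (Nat.succ_pos n)).2
      have e2 : a2 ⟨n, Nat.lt_succ_self n⟩ = (s:ℤ) := (h2.1.2.2.2 (Nat.succ_pos n)).2
      funext i
      induction i using Fin.lastCases with
      | last => exact e1.trans e2.symm
      | cast j => exact congrFun heq j
    · -- surjective
      intro b hb
      have hb' := hb
      rw [Sfin, Finset.mem_filter] at hb'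
      obtain ⟨hpi, hbd, halt, hend⟩ := hb'
      have hb0 : b ⟨0, by omega⟩ = (r:ℤ) := (hend (by omega)).1
      have hbl : b ⟨n-1, by omega⟩ = (t:ℤ) := (hend (by omega)).2
      have hsn : ∀ (j : ℕ) (hj : j < n) (hj' : j < n+1),
          (Fin.snoc b (s:ℤ) : Fin (n+1) → ℤ) ⟨j, hj'⟩ = b ⟨j, hj⟩ := by
        intro j hj hj'
        have : (⟨j, hj'⟩ : Fin (n+1)) = Fin.castSucc ⟨j, hj⟩ := rfl
        rw [this, Fin.snoc_castSucc]
      have hsl : (Fin.snoc b (s:ℤ) : Fin (n+1) → ℤ) ⟨n, by omega⟩ = (s:ℤ) := by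
        have : (⟨n, by omega⟩ : Fin (n+1)) = Fin.last n := rfl
        rw [this, Fin.snoc_last]
      refine ⟨Fin.snoc b (s:ℤ), ?_, ?_⟩
      · rw [Finset.mem_filter]
        constructor
        · rw [Sfin, Finset.mem_filter]
          refine ⟨?_, ?_, ?_, ?_⟩
          · rw [Fintype.mem_piFinset]
            intro i
            induction i using Fin.lastCases with
            | last =>
                rw [Fin.snoc_last]
                exact Finset.mem_Icc.mpr ⟨by exact_mod_cast hs1, by exact_mod_cast hsk⟩
            | cast j =>
                rw [Fin.snoc_castSucc]
                exact Fintype.mem_piFinset.mp hpi j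
          · intro i
            induction i using Fin.lastCases with
            | last =>
                rw [Fin.snoc_last]
                exact ⟨by exact_mod_cast hs1, by exact_mod_cast hsk⟩
            | cast j =>
                rw [Fin.snoc_castSucc]
                exact hbd j
          · intro i h
            rcases Nat.lt_or_ge (i+1) n with h2 | h2
            · have hh := halt i h2
              have e1 := hsn i (Nat.lt_of_succ_lt h2) (Nat.lt_of_succ_lt h)
              have e2 := hsn (i+1) h2 h
              rw [e1, e2]
              exact hh
            · -- i = n-1
              have ha1 : (Fin.snoc b (s:ℤ) : Fin (n+1) → ℤ) ⟨i, Nat.lt_of_succ_lt h⟩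
                  = (t:ℤ) := by
                rw [hsn i (by omega) (Nat.lt_of_succ_lt h)]
                have : (⟨i, by omega⟩ : Fin n) = ⟨n-1, by omega⟩ :=
                  Fin.ext (show i = n-1 by omega)
                rw [this, hbl]
              have ha2 : (Fin.snoc b (s:ℤ) : Fin (n+1) → ℤ) ⟨i+1, h⟩ = (s:ℤ) := by
                have : (⟨i+1, h⟩ : Fin (n+1)) = Fin.last n :=
                  Fin.ext (show i+1 = n by omega)
                rw [this, Fin.snoc_last]
              rw [ha1, ha2]
              split_ifs with hpar
              · exact_mod_cast hcond.1 (by omega)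
              · exact_mod_cast hcond.2 (by omega)
          · intro h
            refine ⟨?_, ?_⟩
            · have := hsn 0 (by omega) h
              rw [this]
              exact hb0
            · show (Fin.snoc b (s:ℤ) : Fin (n+1) → ℤ) ⟨n, by omega⟩ = (s:ℤ)
              exact hsl
        · show ((Fin.snoc b (s:ℤ) : Fin (n+1) → ℤ) ⟨n-1, hm⟩).toNat = t
          have e1 : (Fin.snoc b (s:ℤ) : Fin (n+1) → ℤ) ⟨n-1, hm⟩ = (t:ℤ) := by
            rw [hsn (n-1) (by omega) hm, hbl]
          omega
      · funext j
        rw [Fin.snoc_castSucc]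
  · rw [if_neg hcond]
    rw [Finset.card_eq_zero]
    ext a
    simp only [Finset.mem_filter, Finset.notMem_empty, iff_false, not_and]
    intro ha hfa
    obtain ⟨-, hc1, hc2⟩ := key a ha
    have hpen : a ⟨n-1, hm⟩ = (t:ℤ) := (hval a ha).mp hfa
    rw [hpen] at hc1 hc2
    exact hcond ⟨fun h => by exact_mod_cast hc1 h, fun h => by exact_mod_cast hc2 h⟩

theorem Sfin_two (k r s : ℕ) (hr : 1 ≤ r) (hrk : r ≤ k) (hs1 : 1 ≤ s) (hsk : s ≤ k) :
    (Sfin k 2 r s).card = if r ≤ s then 1 else 0 := by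
  classical
  rw [show (2:ℕ) = 1+1 from rfl, Sfin_step k 1 r s (le_refl 1) hs1 hsk]
  have h1 : ∀ t ∈ Finset.Icc 1 k,
      (if ((1:ℕ) % 2 = 1 → t ≤ s) ∧ ((1:ℕ) % 2 = 0 → s ≤ t) then (Sfin k 1 r t).card else 0)
        = if t = r ∧ t ≤ s then 1 else 0 := by
    intro t ht
    rw [Finset.mem_Icc] at ht
    rw [Sfin_one]
    by_cases hts : t ≤ s
    · rw [if_pos (show ((1:ℕ)%2 = 1 → t ≤ s) ∧ ((1:ℕ)%2 = 0 → s ≤ t) from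
        ⟨fun _ => hts, fun hh => absurd hh (by omega)⟩)]
      by_cases hrt : r = t
      · rw [if_pos ⟨hrt, ht.1, ht.2⟩, if_pos ⟨hrt.symm, hts⟩]
      · rw [if_neg (fun hh => hrt hh.1), if_neg (fun hh => hrt hh.1.symm)]
    · rw [if_neg (fun hh => hts (hh.1 rfl)), if_neg (fun hh => hts hh.2)]
  rw [Finset.sum_congr rfl h1,
    Finset.sum_eq_single_of_mem r (Finset.mem_Icc.mpr ⟨hr, hrk⟩)
      (fun t _ hne => by simp [hne])]
  by_cases h : r ≤ s <;> simp [h]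

theorem Sfin_double (k n r s : ℕ) (hn2 : 2 ≤ n) (hne : n % 2 = 0) (hs1 : 1 ≤ s)
    (hsk : s ≤ k) :
    (Sfin k (n+2) r s).card = ∑ t ∈ Finset.Icc 1 k, (min t s) * (Sfin k n r t).card := by
  classical
  have h1 : (Sfin k (n+2) r s).card
      = ∑ u ∈ Finset.Icc 1 k, if u ≤ s then (Sfin k (n+1) r u).card else 0 := by
    rw [show n+2 = (n+1)+1 from rfl, Sfin_step k (n+1) r s (by omega) hs1 hsk]
    refine Finset.sum_congr rfl fun u hu => ?_
    by_cases hc : u ≤ s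
    · rw [if_pos ⟨fun _ => hc, fun hh => absurd hh (by omega)⟩, if_pos hc]
    · rw [if_neg (fun hh => hc (hh.1 (by omega))), if_neg hc]
  have h2 : ∀ u, 1 ≤ u → u ≤ k → (Sfin k (n+1) r u).card
      = ∑ t ∈ Finset.Icc 1 k, if u ≤ t then (Sfin k n r t).card else 0 := by
    intro u hu1 huk
    rw [Sfin_step k n r u (by omega) hu1 huk]
    refine Finset.sum_congr rfl fun t ht => ?_
    by_cases hc : u ≤ t
    · rw [if_pos ⟨fun hh => absurd hh (by omega), fun _ => hc⟩, if_pos hc]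
    · rw [if_neg (fun hh => hc (hh.2 hne)), if_neg hc]
  rw [h1]
  calc ∑ u ∈ Finset.Icc 1 k, (if u ≤ s then (Sfin k (n+1) r u).card else 0)
      = ∑ u ∈ Finset.Icc 1 k, ∑ t ∈ Finset.Icc 1 k,
          (if u ≤ s ∧ u ≤ t then (Sfin k n r t).card else 0) := by
        refine Finset.sum_congr rfl fun u hu => ?_
        rw [Finset.mem_Icc] at hu
        by_cases hc : u ≤ s
        · rw [if_pos hc, h2 u hu.1 hu.2]
          refine Finset.sum_congr rfl fun t ht => ?_
          by_cases hc2 : u ≤ t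
          · rw [if_pos hc2, if_pos ⟨hc, hc2⟩]
          · rw [if_neg hc2, if_neg (fun hh => hc2 hh.2)]
        · rw [if_neg hc]
          symm
          exact Finset.sum_eq_zero fun t ht => by rw [if_neg (fun hh => hc hh.1)]
    _ = ∑ t ∈ Finset.Icc 1 k, ∑ u ∈ Finset.Icc 1 k,
          (if u ≤ s ∧ u ≤ t then (Sfin k n r t).card else 0) := Finset.sum_comm
    _ = ∑ t ∈ Finset.Icc 1 k, (min t s) * (Sfin k n r t).card := by
        refine Finset.sum_congr rfl fun t ht => ?_
        rw [Finset.mem_Icc] at ht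
        rw [← Finset.sum_filter]
        have hfil : (Finset.Icc 1 k).filter (fun u => u ≤ s ∧ u ≤ t)
            = Finset.Icc 1 (min t s) := by
          ext u
          simp only [Finset.mem_filter, Finset.mem_Icc]
          omega
        rw [hfil, Finset.sum_const, Nat.card_Icc, smul_eq_mul,
          Nat.add_sub_cancel]

noncomputable def Fser (k r s : ℕ) : PowerSeries ℚ :=
  PowerSeries.mk fun n => if n % 2 = 1 then (altCountFL k (n + 1) r s : ℚ) else 0

theorem FP1 (k r s : ℕ) (hr : 1 ≤ r) (hrk : r ≤ k) (hs : 1 ≤ s) (hsk : s ≤ k) :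
    Fser k r s = PowerSeries.C (if r ≤ s then 1 else 0) * PowerSeries.X
      + PowerSeries.X^2
        * ∑ t ∈ Finset.Icc 1 k, PowerSeries.C ((min t s : ℕ) : ℚ) * Fser k r t := by
  classical
  ext n
  rw [Fser, PowerSeries.coeff_mk, map_add, PowerSeries.coeff_C_mul, PowerSeries.coeff_X,
    PowerSeries.coeff_X_pow_mul', map_sum]
  have hsum : ∀ d : ℕ, ∑ t ∈ Finset.Icc 1 k,
        (PowerSeries.coeff d) (PowerSeries.C ((min t s : ℕ):ℚ) * Fser k r t)
      = ∑ t ∈ Finset.Icc 1 k,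
          ((min t s : ℕ):ℚ) * (if d % 2 = 1 then (altCountFL k (d+1) r t : ℚ) else 0) := by
    intro d
    refine Finset.sum_congr rfl fun t _ => ?_
    rw [PowerSeries.coeff_C_mul, Fser, PowerSeries.coeff_mk]
  rcases n with _ | _ | m
  · norm_num
  · -- n = 1
    norm_num
    rw [altCountFL_eq, Sfin_two k r s hr hrk hs hsk]
    split_ifs <;> norm_num
  · -- n = m + 2
    rw [if_neg (by omega : ¬ (m+2) = 1), if_pos (by omega : 2 ≤ m+2)]
    rw [show m+2-2 = m from rfl, hsum m]
    rw [mul_zero, zero_add]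
    by_cases hodd : (m+2) % 2 = 1
    · rw [if_pos hodd]
      have hmodd : m % 2 = 1 := by omega
      have hm1 : 2 ≤ m+1 := by omega
      have heven : (m+1) % 2 = 0 := by omega
      rw [altCountFL_eq, show m+2+1 = (m+1)+2 from rfl,
        Sfin_double k (m+1) r s hm1 heven hs hsk]
      push_cast
      refine Finset.sum_congr rfl fun t _ => ?_
      rw [if_pos hmodd, altCountFL_eq]
    · rw [if_neg hodd]
      symm
      refine Finset.sum_eq_zero fun t _ => ?_
      rw [if_neg (by omega : ¬ m % 2 = 1), mul_zero]

noncomputable def Gser (k r s : ℕ) : PowerSeries ℚ :=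
  ((qq k r s : Polynomial ℚ) : PowerSeries ℚ)

theorem GP2 (k r s : ℕ) (hr : 1 ≤ r) (hrk : r ≤ k) (hs : 1 ≤ s) (hsk : s ≤ k) :
    Gser k r s = PowerSeries.C (if r ≤ s then 1 else 0)
        * ((U2 (2*(k:ℤ)) : Polynomial ℚ) : PowerSeries ℚ)
      + PowerSeries.X^2
        * ∑ t ∈ Finset.Icc 1 k, PowerSeries.C ((min t s : ℕ) : ℚ) * Gser k r t := by
  classical
  have hIcc : Finset.Icc 1 k = Finset.Ioc 0 k := by
    ext x
    simp only [Finset.mem_Icc, Finset.mem_Ioc]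
    omega
  have hp := P2 k r s hr hrk hs hsk
  have h2 := congrArg (Polynomial.coeToPowerSeries.ringHom (R := ℚ)) hp
  rw [map_add, map_mul, map_sum] at h2
  simp only [Polynomial.coeToPowerSeries.ringHom_apply] at h2
  rw [Gser, h2]
  congr 1
  · split_ifs with h
    · rw [map_one, one_mul]
    · rw [map_zero, zero_mul, Polynomial.coe_zero]
  · congr 1
    · rw [Polynomial.coe_pow, Polynomial.coe_X]
    · rw [hIcc]
      refine Finset.sum_congr rfl fun t _ => ?_
      rw [Polynomial.coe_mul, Gser]
      congr 1
      rw [← Polynomial.C_eq_natCast, Polynomial.coe_C]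

theorem mainEq (k r s : ℕ) (hr : 1 ≤ r) (hrk : r ≤ k) (hs : 1 ≤ s) (hsk : s ≤ k) :
    ((U2 (2*(k:ℤ)) : Polynomial ℚ) : PowerSeries ℚ) * Fser k r s
      = PowerSeries.X * Gser k r s := by
  classical
  set U : PowerSeries ℚ := ((U2 (2*(k:ℤ)) : Polynomial ℚ) : PowerSeries ℚ) with hU
  set Df : ℕ → PowerSeries ℚ :=
    fun t => U * Fser k r t - PowerSeries.X * Gser k r t with hDf
  have hD : ∀ t, 1 ≤ t → t ≤ k → Df t
      = PowerSeries.X^2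
        * ∑ u ∈ Finset.Icc 1 k, PowerSeries.C ((min u t : ℕ):ℚ) * Df u := by
    intro t h1 h2
    have hF := FP1 k r t hr hrk h1 h2
    have hG := GP2 k r t hr hrk h1 h2
    have hsum : ∑ u ∈ Finset.Icc 1 k, PowerSeries.C ((min u t:ℕ):ℚ) * Df u
        = U * (∑ u ∈ Finset.Icc 1 k, PowerSeries.C ((min u t:ℕ):ℚ) * Fser k r u)
          - PowerSeries.X
            * (∑ u ∈ Finset.Icc 1 k, PowerSeries.C ((min u t:ℕ):ℚ) * Gser k r u) := by
      rw [Finset.mul_sum, Finset.mul_sum, ← Finset.sum_sub_distrib]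
      refine Finset.sum_congr rfl fun u _ => ?_
      rw [hDf]
      ring
    rw [hDf]
    show U * Fser k r t - PowerSeries.X * Gser k r t = _
    rw [hsum]
    linear_combination U * hF - PowerSeries.X * hG
  have key : ∀ n, ∀ t, 1 ≤ t → t ≤ k → (PowerSeries.coeff n) (Df t) = 0 := by
    intro n
    induction n using Nat.strong_induction_on with
    | _ n ih =>
      intro t h1 h2
      rw [hD t h1 h2, PowerSeries.coeff_X_pow_mul']
      by_cases hn : 2 ≤ n
      · rw [if_pos hn, map_sum]
        refine Finset.sum_eq_zero fun u hu => ?_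
        rw [Finset.mem_Icc] at hu
        rw [PowerSeries.coeff_C_mul, ih (n-2) (by omega) u hu.1 hu.2, mul_zero]
      · rw [if_neg hn]
  have hzero : Df s = 0 := PowerSeries.ext fun n => by rw [key n s hs hsk, map_zero]
  have := sub_eq_zero.mp hzero
  exact this

theorem statement2 (k r s : ℕ) (hr : 1 ≤ r) (hrk : r ≤ k) (hs : 1 ≤ s) (hsk : s ≤ k) :
    (r ≤ s →
      (U2 (2 * k) : PowerSeries ℚ) *
          (PowerSeries.mk fun n => if n % 2 = 1 then (altCountFL k (n + 1) r s : ℚ) else 0)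
        = (-1) ^ (r + s + 1) * PowerSeries.X *
            (U2 (2 * (r : ℤ) - 2) : PowerSeries ℚ) *
            (U2 (2 * (k : ℤ) - 2 * (s : ℤ)) : PowerSeries ℚ)) ∧
    (s < r →
      (U2 (2 * k) : PowerSeries ℚ) *
          (PowerSeries.mk fun n => if n % 2 = 1 then (altCountFL k (n + 1) r s : ℚ) else 0)
        = (-1) ^ (r + s + 1) * PowerSeries.X *
            (U2 (2 * (s : ℤ) - 1) : PowerSeries ℚ) *
            (U2 (2 * (k : ℤ) - 2 * (r : ℤ) + 1) : PowerSeries ℚ)) := by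
  have hmain := mainEq k r s hr hrk hs hsk
  have hneg : ((-1 : Polynomial ℚ) : PowerSeries ℚ) = -1 := by
    rw [← Polynomial.coeToPowerSeries.ringHom_apply, map_neg, map_one]
  constructor
  · intro h
    rw [show (PowerSeries.mk fun n => if n % 2 = 1 then (altCountFL k (n + 1) r s : ℚ) else 0)
        = Fser k r s from rfl, hmain, Gser, qq, if_pos h,
      Polynomial.coe_mul, Polynomial.coe_mul, Polynomial.coe_pow, hneg]
    ring
  · intro h
    rw [show (PowerSeries.mk fun n => if n % 2 = 1 then (altCountFL k (n + 1) r s : ℚ) else 0)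
        = Fser k r s from rfl, hmain, Gser, qq, if_neg (by omega : ¬ r ≤ s),
      Polynomial.coe_mul, Polynomial.coe_mul, Polynomial.coe_pow, hneg]
    ring
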